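/- arXiv:2107.09146 — 2 statements merged into one kernel-verified Lean document; each statement's English description precedes it below -/
import Mathlib

section
/- For λ → ∞, the ground state energy e₀^λ of the square well of depth λ² and width w, determined by the smallest solution κ ∈ (0, π/w) of κ tan(κw/2) = sqrt(λ² - κ²) and e₀^λ = κ² - λ², satisfies e₀^λ = -λ² + π²/w² + O(1/λ). -/
open Real Filter Asymptotics

/-- The ground state energy `e₀^λ = κ_λ² - λ²` of the square well of depth `λ²`
and width `w`, where `κ_λ ∈ (0, π/w)` is the smallest solution of
`κ tan(κw/2) = √(λ² - κ²)`, satisfies `e₀^λ = -λ² + π²/w² + O(1/λ)` as `λ → ∞`. -/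
theorem square_well_ground_energy_asymptotics (w : ℝ) (hw : 0 < w) (κ : ℝ → ℝ)
    (hκ : ∀ᶠ lam in atTop,
      IsLeast {x : ℝ | x ∈ Set.Ioo 0 (π / w) ∧
        x * Real.tan (x * w / 2) = Real.sqrt (lam ^ 2 - x ^ 2)} (κ lam)) :
    (fun lam : ℝ => (κ lam ^ 2 - lam ^ 2) - (-lam ^ 2 + π ^ 2 / w ^ 2))
      =O[atTop] (fun lam : ℝ => 1 / lam) := by
  rw [isBigO_iff]
  refine ⟨8 * π ^ 2 / w ^ 3, ?_⟩
  filter_upwards [hκ, eventually_ge_atTop (1 : ℝ),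
    eventually_ge_atTop (2 * π / w)] with lam hle hlam1 hlam2
  obtain ⟨⟨⟨hx0, hx1⟩, heq⟩, -⟩ := hle
  set x := κ lam with hxdef
  have hlamp : (0:ℝ) < lam := lt_of_lt_of_le one_pos hlam1
  have hπw : 0 < π / w := div_pos pi_pos hw
  have hx2 : x ^ 2 < (π / w) ^ 2 := by
    apply pow_lt_pow_left₀ hx1 hx0.le
    norm_num
  have hlamsq : 4 * (π / w) ^ 2 ≤ lam ^ 2 := by
    have h := mul_self_le_mul_self (by positivity : (0:ℝ) ≤ 2 * π / w) hlam2
    calc 4 * (π / w) ^ 2 = (2 * π / w) * (2 * π / w) := by ring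
      _ ≤ lam * lam := h
      _ = lam ^ 2 := by ring
  -- sqrt lower bound
  have hsub : lam ^ 2 / 4 ≤ lam ^ 2 - x ^ 2 := by nlinarith
  have hsqrt : lam / 2 ≤ Real.sqrt (lam ^ 2 - x ^ 2) := by
    rw [show lam / 2 = Real.sqrt ((lam / 2) ^ 2) from
      (Real.sqrt_sq (by positivity)).symm]
    apply Real.sqrt_le_sqrt
    nlinarith
  set t := x * w / 2 with htdef
  have ht0 : 0 < t := by positivity
  have ht1 : t < π / 2 := by
    have : x * w < (π / w) * w := by exact mul_lt_mul_of_pos_right hx1 hw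
    rw [div_mul_cancel₀ _ hw.ne'] at this
    linarith [this]
  have htan : lam / (2 * x) ≤ Real.tan t := by
    rw [div_le_iff₀ (by positivity : (0:ℝ) < 2 * x)]
    nlinarith [heq, hsqrt]
  have htanpos : 0 < Real.tan t := lt_of_lt_of_le (by positivity) htan
  -- s = π/2 - t
  set s := π / 2 - t with hsdef
  have hs0 : 0 < s := by simp [hsdef]; linarith
  have hs1 : s < π / 2 := by simp [hsdef]; linarith
  have htans : Real.tan s = (Real.tan t)⁻¹ := Real.tan_pi_div_two_sub t
  have hslt : s < (Real.tan t)⁻¹ := htans ▸ Real.lt_tan hs0 hs1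
  have hinv : (Real.tan t)⁻¹ ≤ 2 * x / lam := by
    have h := inv_anti₀ (by positivity : (0:ℝ) < lam / (2 * x)) htan
    rwa [inv_div] at h
  have hslam : s ≤ 2 * x / lam := le_of_lt (lt_of_lt_of_le hslt hinv)
  -- translate to bound on π/w - x
  have hgap : π / w - x ≤ 4 * (π / w) / (w * lam) := by
    have hs_eq : s = (w / 2) * (π / w - x) := by
      rw [hsdef, htdef]
      field_simp
    have hxle : x ≤ π / w := hx1.le
    rw [hs_eq, le_div_iff₀ (by positivity : (0:ℝ) < lam)] at hslam
    rw [le_div_iff₀ (by positivity : (0:ℝ) < w * lam)]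
    nlinarith [hslam, hxle, hw, hlamp]
  -- final bound
  have hfinal : (π / w) ^ 2 - x ^ 2 ≤ 8 * π ^ 2 / w ^ 3 * (1 / lam) := by
    have h1 : π / w + x ≤ 2 * (π / w) := by linarith [hx1.le]
    have h2 : (π / w) ^ 2 - x ^ 2 = (π / w - x) * (π / w + x) := by ring
    rw [h2]
    have h3 : (π / w - x) * (π / w + x) ≤ (4 * (π / w) / (w * lam)) * (2 * (π / w)) := by
      apply mul_le_mul hgap h1 (by positivity) (by positivity)
    calc (π / w - x) * (π / w + x) ≤ (4 * (π / w) / (w * lam)) * (2 * (π / w)) := h3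
      _ = 8 * π ^ 2 / w ^ 3 * (1 / lam) := by
          field_simp
          ring
  have hnorm : ‖x ^ 2 - lam ^ 2 - (-lam ^ 2 + π ^ 2 / w ^ 2)‖ = (π / w) ^ 2 - x ^ 2 := by
    have hx2' : x ^ 2 < π ^ 2 / w ^ 2 := by rwa [div_pow] at hx2
    rw [Real.norm_eq_abs, abs_of_nonpos (by linarith [hx2'])]
    rw [div_pow]
    ring
  rw [hnorm, Real.norm_eq_abs, abs_of_pos (by positivity)]
  exact hfinal
end

section
/- With κ_λ defined as the smallest positive root of κ tan(κw/2) = sqrt(λ² - κ²), one has κ_λ → π/w as λ → ∞, and moreover w(π/w - κ_λ) = O(1/λ). -/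
open Real Filter Asymptotics

lemma square_well_key (w lam k : ℝ) (hw : 0 < w) (hlam1 : (1:ℝ) ≤ lam)
    (hlam2 : 2 * (π / w) ≤ lam) (hk0 : 0 < k) (hklt : k < π / w)
    (heq : k * Real.tan (k * w / 2) = Real.sqrt (lam ^ 2 - k ^ 2)) :
    π / w - k ≤ 4 * π / w ^ 2 * (1 / lam) := by
  have hpi := Real.pi_pos
  have hc : 0 < π / w := div_pos hpi hw
  set s : ℝ := π / 2 - k * w / 2 with hs_def
  have htlt : k * w / 2 < π / 2 := by
    have : k * w < π := by
      have := (lt_div_iff₀ hw).mp hklt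
      linarith
    linarith
  have hs0 : 0 < s := by simp [hs_def]; linarith
  have hs2 : s < π / 2 := by
    have : 0 < k * w / 2 := by positivity
    simp only [hs_def]; linarith
  have htan_s : s < Real.tan s := Real.lt_tan hs0 hs2
  have htan_eq : Real.tan (k * w / 2) = (Real.tan s)⁻¹ := by
    have : Real.tan (π / 2 - s) = (Real.tan s)⁻¹ := Real.tan_pi_div_two_sub s
    rw [show π / 2 - s = k * w / 2 by simp [hs_def]] at this
    exact this
  have htanpos : 0 < Real.tan s := lt_trans hs0 htan_s
  have hinv : (Real.tan s)⁻¹ ≤ 1 / s := by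
    rw [one_div]
    exact inv_anti₀ hs0 htan_s.le
  -- lower bound on sqrt
  have hsqrt : lam / 2 ≤ Real.sqrt (lam ^ 2 - k ^ 2) := by
    rw [show lam / 2 = Real.sqrt ((lam / 2) ^ 2) from
      (Real.sqrt_sq (by linarith)).symm]
    apply Real.sqrt_le_sqrt
    nlinarith
  have hmain : lam / 2 ≤ (π / w) * (1 / s) := by
    calc lam / 2 ≤ Real.sqrt (lam ^ 2 - k ^ 2) := hsqrt
    _ = k * (Real.tan s)⁻¹ := by rw [← heq, htan_eq]
    _ ≤ (π / w) * (1 / s) := by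
        apply mul_le_mul hklt.le hinv (by positivity) hc.le
  -- so s ≤ 2 (π/w) / lam
  have hlampos : 0 < lam := lt_of_lt_of_le one_pos hlam1
  have hsle : s ≤ 2 * (π / w) / lam := by
    rw [le_div_iff₀ hlampos]
    have h' : π / w * (1 / s) * s = π / w := by field_simp
    nlinarith [mul_le_mul_of_nonneg_right hmain hs0.le]
  have : π / w - k = 2 / w * s := by
    simp only [hs_def]; field_simp
  rw [this]
  calc 2 / w * s ≤ 2 / w * (2 * (π / w) / lam) := by
        apply mul_le_mul_of_nonneg_left hsle (by positivity)
  _ = 4 * π / w ^ 2 * (1 / lam) := by field_simp; ring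

/-- With `κ_λ` the smallest positive root of `κ tan(κw/2) = √(λ² - κ²)` in
`(0, π/w)`, one has `κ_λ → π/w` as `λ → ∞`, and `w(π/w - κ_λ) = O(1/λ)`. -/
theorem square_well_wavenumber_asymptotics (w : ℝ) (hw : 0 < w) (κ : ℝ → ℝ)
    (hκ : ∀ᶠ lam in atTop,
      IsLeast {x : ℝ | x ∈ Set.Ioo 0 (π / w) ∧
        x * Real.tan (x * w / 2) = Real.sqrt (lam ^ 2 - x ^ 2)} (κ lam)) :
    Tendsto κ atTop (nhds (π / w)) ∧
    (fun lam : ℝ => w * (π / w - κ lam)) =O[atTop] (fun lam : ℝ => 1 / lam) := by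
  have key : ∀ᶠ lam in atTop, (1:ℝ) ≤ lam ∧ 0 ≤ π / w - κ lam ∧
      π / w - κ lam ≤ 4 * π / w ^ 2 * (1 / lam) := by
    filter_upwards [hκ, eventually_ge_atTop (1:ℝ),
      eventually_ge_atTop (2 * (π / w))] with lam h h1 h2
    obtain ⟨⟨⟨hk0, hklt⟩, heq⟩, -⟩ := h
    exact ⟨h1, by linarith, square_well_key w lam (κ lam) hw h1 h2 hk0 hklt heq⟩
  constructor
  · have hlow : Tendsto (fun lam : ℝ => π / w - 4 * π / w ^ 2 * (1 / lam)) atTop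
        (nhds (π / w)) := by
      have : Tendsto (fun lam : ℝ => 4 * π / w ^ 2 * (1 / lam)) atTop (nhds 0) := by
        have := tendsto_inv_atTop_zero (𝕜 := ℝ) |>.const_mul (4 * π / w ^ 2)
        rw [mul_zero] at this
        simpa [one_div] using this
      simpa using tendsto_const_nhds.sub this
    refine tendsto_of_tendsto_of_tendsto_of_le_of_le' hlow tendsto_const_nhds ?_ ?_
    · filter_upwards [key] with lam ⟨_, _, h2⟩; linarith
    · filter_upwards [key] with lam ⟨_, h1, _⟩; linarith
  · rw [isBigO_iff]
    refine ⟨4 * π / w, ?_⟩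
    filter_upwards [key] with lam ⟨h1, hnn, hub⟩
    have hlampos : (0:ℝ) < lam := lt_of_lt_of_le one_pos h1
    rw [Real.norm_eq_abs, Real.norm_eq_abs, abs_of_nonneg (by positivity : (0:ℝ) ≤ w * (π / w - κ lam)), abs_of_nonneg (by positivity : (0:ℝ) ≤ 1 / lam)]
    calc w * (π / w - κ lam) ≤ w * (4 * π / w ^ 2 * (1 / lam)) :=
          mul_le_mul_of_nonneg_left hub hw.le
    _ = 4 * π / w * (1 / lam) := by field_simp
end
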